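/- (Riemann–Caputo relation in explicit form) Let q, α ∈ (0,1), let n0 be an integer, and let y : ℤ → ℝ. Then for every integer n ≤ n0: (S_y(n) − S_y(n+1))/q^n = Σ_{i=n}^{n0} (q^n − q^{i+1})_q^{−α} (y(i) − y(i+1)) + (q^n − q^{n0+1})_q^{−α} · y(n0+1). (This expresses the identity (_q∇_{qa}^{α} y)(t) = (_qC_{qa}^{α} y)(t) + ((t − qa)_q^{−α}/Γ_q(1−α)) y(qa) relating the Riemann and Caputo q-fractional derivatives of order α based at qa, a = q^{n0}, at t = q^n.) -/

import Mathlib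

/-!
Write `(q^m - q^k)_q^{-α} = q^{-mα} P(k - m)` with `P(c) = ∏_j (1 - q^{c+j}) / (1 - q^{c+j-α})`.
Peeling off the first factor of `P(c)` gives `(1 - q^{c-α}) P(c) = (1 - q^c) P(c+1)`, which is
equivalent to `q^i [(q^n - q^{i+1})^{-α} - (q^{n+1} - q^{i+1})^{-α}]
= q^n [(q^n - q^{i+1})^{-α} - (q^n - q^i)^{-α}]` for `n < i`. Hence `S_y(n) - S_y(n+1)` is `q^n`
times a sum which summation by parts turns into the right-hand side.
-/

/-- The q-factorial power `(q^m - q^k)_q^{-α}` for integers `m < k`, defined by the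
convergent infinite product
`q^{-mα} · ∏_{j=0}^∞ (1 - q^{k-m+j}) / (1 - q^{k-m+j-α})`. -/
noncomputable def qFac (q α : ℝ) (m k : ℤ) : ℝ :=
  q ^ (-(m : ℝ) * α) *
    ∏' j : ℕ, (1 - q ^ (((k - m : ℤ) : ℝ) + (j : ℝ))) /
      (1 - q ^ (((k - m : ℤ) : ℝ) + (j : ℝ) - α))

/-- `S q α n0 y n = Σ_{i=n}^{n0} q^i (q^n - q^{i+1})_q^{-α} y(i)`; for `n = n0 + 1`
the range is empty, so `S q α n0 y (n0+1) = 0`.  The Riemann q-fractional derivative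
of order `α` based at `qa = q^{n0+1}`, evaluated at `t = q^n`, is
`(S q α n0 y n - S q α n0 y (n+1)) / ((1-q) q^n Γ_q(1-α))`,
whose sign is that of `S q α n0 y n - S q α n0 y (n+1)`. -/
noncomputable def S (q α : ℝ) (n0 : ℤ) (y : ℤ → ℝ) (n : ℤ) : ℝ :=
  ∑ i ∈ Finset.Icc n n0, q ^ (i : ℝ) * qFac q α n (i + 1) * y i

open Real Finset

lemma sum_Icc_by_parts_int {R : Type*} [CommRing R] (F y : ℤ → R) {m n : ℤ} (hmn : m ≤ n) :
    ∑ i ∈ Icc m n, F (i + 1) * (y i - y (i + 1)) + F (n + 1) * y (n + 1) =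
      F (m + 1) * y m + ∑ i ∈ Icc (m + 1) n, (F (i + 1) - F i) * y i := by
  induction n, hmn using Int.leInduction with
  | base =>
    simp only [Icc_self, sum_singleton, Icc_eq_empty_of_lt (lt_add_one m), sum_empty, add_zero]
    ring
  | succ n hmn ih =>
    rw [← insert_Icc_right_eq_Icc_add_one (by omega), ← insert_Icc_right_eq_Icc_add_one (by omega),
      sum_insert (by simp), sum_insert (by simp)]
    linear_combination ih

section QFactorial

variable {q α c : ℝ}

noncomputable def qRatioProd (q α c : ℝ) : ℝ :=
  ∏' j : ℕ, (1 - q ^ (c + j)) / (1 - q ^ (c + j - α))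

lemma qFac_eq (m k : ℤ) :
    qFac q α m k = q ^ (-(m : ℝ) * α) * qRatioProd q α (k - m) := by
  rw [qFac, qRatioProd, Int.cast_sub]

lemma multipliable_qRatioProd (hq0 : 0 < q) (hq1 : q < 1) (hc : α < c) :
    Multipliable fun j : ℕ => (1 - q ^ (c + j)) / (1 - q ^ (c + j - α)) := by
  set r := q ^ (c - α)
  have hr : r < 1 := rpow_lt_one hq0.le hq1 (sub_pos.2 hc)
  have hrq : ∀ j : ℕ, r * q ^ j < 1 := fun j =>
    (mul_le_of_le_one_right (by positivity) (pow_le_one₀ hq0.le hq1.le)).trans_lt hr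
  have hfactor : ∀ j : ℕ, (1 - q ^ (c + j)) / (1 - q ^ (c + j - α)) =
      1 + q ^ j * ((r - q ^ c) / (1 - r * q ^ j)) := by
    intro j
    have hsplit : q ^ (c + j - α) = r * q ^ j := by
      rw [add_sub_right_comm, rpow_add hq0, rpow_natCast]
    rw [hsplit, rpow_add hq0, rpow_natCast, mul_div_assoc', one_add_div (sub_pos.2 (hrq j)).ne']
    ring
  refine (Real.multipliable_one_add_of_summable ?_).congr fun j => (hfactor j).symm
  refine Summable.of_norm_bounded
    ((summable_geometric_of_lt_one hq0.le hq1).mul_left (|r - q ^ c| / (1 - r))) fun j => ?_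
  have hqj : 0 < q ^ j := by positivity
  rw [norm_mul, norm_div, Real.norm_of_nonneg hqj.le, Real.norm_of_nonneg (sub_pos.2 (hrq j)).le,
    Real.norm_eq_abs, mul_comm]
  gcongr
  exact mul_le_of_le_one_right (by positivity) (pow_le_one₀ hq0.le hq1.le)

lemma qRatioProd_recurrence (hq0 : 0 < q) (hq1 : q < 1) (hc : α < c) :
    (1 - q ^ (c - α)) * qRatioProd q α c = (1 - q ^ c) * qRatioProd q α (c + 1) := by
  have hshift : ∀ j : ℕ, c + ((j + 1 : ℕ) : ℝ) = c + 1 + j := fun j => by push_cast; ring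
  have hmul : Multipliable fun j : ℕ =>
      (1 - q ^ (c + (j + 1 : ℕ))) / (1 - q ^ (c + (j + 1 : ℕ) - α)) := by
    simpa only [hshift] using multipliable_qRatioProd (c := c + 1) hq0 hq1 (by linarith)
  have hden : 1 - q ^ (c - α) ≠ 0 := (sub_pos.2 (rpow_lt_one hq0.le hq1 (sub_pos.2 hc))).ne'
  unfold qRatioProd
  rw [tprod_eq_zero_mul' (f := fun j : ℕ => (1 - q ^ (c + j)) / (1 - q ^ (c + j - α))) hmul]
  simp only [hshift, Nat.cast_zero, add_zero]
  field_simp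

lemma rpow_mul_qFac_sub_qFac_add_one_left (hq0 : 0 < q) (hq1 : q < 1) (hα1 : α < 1)
    {n i : ℤ} (hni : n < i) :
    q ^ (i : ℝ) * (qFac q α n (i + 1) - qFac q α (n + 1) (i + 1)) =
      q ^ (n : ℝ) * (qFac q α n (i + 1) - qFac q α n i) := by
  have hc : α < (i : ℝ) - n := hα1.trans_le (by exact_mod_cast (show (1 : ℤ) ≤ i - n by omega))
  set c : ℝ := i - n
  have hrec := qRatioProd_recurrence hq0 hq1 hc
  have hi : q ^ (i : ℝ) = q ^ (n : ℝ) * q ^ c := by rw [← rpow_add hq0, add_sub_cancel]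
  have hcα : q ^ (c - α) = q ^ c * q ^ (-α) := by rw [sub_eq_add_neg, rpow_add hq0]
  have hnα : q ^ (-((n + 1 : ℤ) : ℝ) * α) = q ^ (-(n : ℝ) * α) * q ^ (-α) := by
    rw [← rpow_add hq0]; push_cast; ring_nf
  rw [qFac_eq, qFac_eq, qFac_eq, hnα, hi]
  rw [hcα] at hrec
  have e1 : ((i + 1 : ℤ) : ℝ) - n = c + 1 := by push_cast; ring
  have e2 : ((i + 1 : ℤ) : ℝ) - ((n + 1 : ℤ) : ℝ) = c := by push_cast; ring
  rw [e1, e2]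
  linear_combination (q ^ (n : ℝ) * q ^ (-(n : ℝ) * α)) * hrec

lemma S_sub_S_add_one (hq0 : 0 < q) (hq1 : q < 1) (hα1 : α < 1) (y : ℤ → ℝ)
    {n n0 : ℤ} (hn : n ≤ n0) :
    S q α n0 y n - S q α n0 y (n + 1) =
      q ^ (n : ℝ) * (qFac q α n (n + 1) * y n +
        ∑ i ∈ Icc (n + 1) n0, (qFac q α n (i + 1) - qFac q α n i) * y i) := by
  rw [S, S, ← insert_Icc_add_one_left_eq_Icc hn, sum_insert (by simp), add_sub_assoc,
    ← sum_sub_distrib, mul_add, mul_sum]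
  congr 1
  · ring
  refine sum_congr rfl fun i hi => ?_
  have hni : n < i := Int.add_one_le_iff.1 (mem_Icc.1 hi).1
  linear_combination y i * rpow_mul_qFac_sub_qFac_add_one_left hq0 hq1 hα1 hni

end QFactorial

theorem qFrac_riemann_caputo_general (q α : ℝ) (hq0 : 0 < q) (hq1 : q < 1)
    (hα1 : α < 1) (n0 : ℤ) (y : ℤ → ℝ) :
    ∀ n : ℤ, n ≤ n0 →
      (S q α n0 y n - S q α n0 y (n + 1)) / q ^ (n : ℝ) =
        (∑ i ∈ Finset.Icc n n0, qFac q α n (i + 1) * (y i - y (i + 1))) +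
          qFac q α n (n0 + 1) * y (n0 + 1) := by
  intro n hn
  rw [S_sub_S_add_one hq0 hq1 hα1 y hn, sum_Icc_by_parts_int _ _ hn,
    mul_div_cancel_left₀ _ (rpow_pos_of_pos hq0 _).ne']

/-- Riemann–Caputo relation in explicit form: for every `n ≤ n0`,
`(S_y(n) - S_y(n+1))/q^n
  = Σ_{i=n}^{n0} (q^n - q^{i+1})_q^{-α} (y(i) - y(i+1)) + (q^n - q^{n0+1})_q^{-α} y(n0+1)`,
which expresses `(_q∇_{qa}^α y)(t) = (_qC_{qa}^α y)(t) + ((t - qa)_q^{-α}/Γ_q(1-α)) y(qa)`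
at `t = q^n`, with base point `qa = q^{n0+1}`. -/
theorem qFrac_riemann_caputo (q α : ℝ) (hq0 : 0 < q) (hq1 : q < 1)
    (hα0 : 0 < α) (hα1 : α < 1) (n0 : ℤ) (y : ℤ → ℝ) :
    ∀ n : ℤ, n ≤ n0 →
      (S q α n0 y n - S q α n0 y (n + 1)) / q ^ (n : ℝ) =
        (∑ i ∈ Finset.Icc n n0, qFac q α n (i + 1) * (y i - y (i + 1))) +
          qFac q α n (n0 + 1) * y (n0 + 1) :=
  qFrac_riemann_caputo_general q α hq0 hq1 hα1 n0 y
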